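/- Let A be a densely defined closed symmetric operator on a complex separable Hilbert space H, and suppose there exists a subspace D with dom(A) ⊆ D ⊆ dom(A*) such that A_D := A*|_D is self-adjoint and bijective as a map D → H. Then the natural Cauchy data space CD(A) := γ(ker A*) = {γ(x) : x ∈ dom(A*), A*x = 0} is a Lagrangian subspace of (β(A), ω̂): ω̂ vanishes on CD(A) × CD(A) and CD(A) equals its ω̂-annihilator {v ∈ β(A) : ω̂(v, w) = 0 for all w ∈ CD(A)}. -/

import Mathlib

/-! Since `ω` vanishes as soon as one argument lies in `dom A`, `ω̂` is computed on arbitrary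
representatives; in particular `ω̂(γ x, γ k) = ⟪A† x, k⟫` for `k ∈ ker A†`, so `CD(A)` is isotropic
and `γ x` annihilates `CD(A)` iff `A† x ⊥ ker A† = (ran A)ᗮ`. If `ran A` is closed, this means
`A† x = A m` with `m ∈ dom A`, and then `γ x = γ (x - m)` with `x - m ∈ ker A†`.

Closedness of `ran A` is where `A_D` enters: being self-adjoint, `A_D` is closed, so its inverse
`H → D` has closed graph and is bounded; since `A ⊆ A_D`, `ran A` is the preimage of the closed
graph of `A` under `y ↦ (A_D⁻¹ y, y)`. -/

open scoped ComplexInnerProductSpace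

noncomputable section

variable {H : Type*} [NormedAddCommGroup H] [InnerProductSpace ℂ H] [CompleteSpace H]

/-- `dom A` viewed as a submodule of `dom A†` (for symmetric `A` one has `dom A ⊆ dom A†`). -/
def minDom (A : H →ₗ.[ℂ] H) : Submodule ℂ A.adjoint.domain :=
  A.domain.comap A.adjoint.domain.subtype

/-- The abstract boundary space `β(A) := dom A† / dom A`. -/
abbrev beta (A : H →ₗ.[ℂ] H) := A.adjoint.domain ⧸ minDom A

/-- The natural quotient map `γ : dom A† → β(A)`. -/
def gammaMap (A : H →ₗ.[ℂ] H) : A.adjoint.domain →ₗ[ℂ] beta A :=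
  (minDom A).mkQ

/-- The Green form `ω(x,y) := ⟪A† x, y⟫ - ⟪x, A† y⟫` on `dom A†`. -/
def omegaForm (A : H →ₗ.[ℂ] H) (x y : A.adjoint.domain) : ℂ :=
  ⟪A.adjoint x, (y : H)⟫ - ⟪(x : H), A.adjoint y⟫

/-- The induced form `ω̂` on `β(A)`, computed on representatives.  (For a closed symmetric `A`
this is well defined, i.e. independent of the representatives.) -/
def omegaHat (A : H →ₗ.[ℂ] H) (v w : beta A) : ℂ :=
  omegaForm A (Quotient.out v) (Quotient.out w)

/-- The restriction `A_D := A†|_D` of the adjoint to an intermediate subspace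
`dom A ⊆ D ⊆ dom A†`, as a partially defined operator on `H`. -/
def adjRestrict (A : H →ₗ.[ℂ] H) (D : Submodule ℂ A.adjoint.domain) : H →ₗ.[ℂ] H :=
  A.adjoint.domRestrict (D.map A.adjoint.domain.subtype)
/-- The natural Cauchy data space `CD(A) := γ(ker A†) ⊆ β(A)`. -/
def cauchyData (A : H →ₗ.[ℂ] H) : Submodule ℂ (beta A) :=
  (LinearMap.ker A.adjoint.toFun).map (gammaMap A)

theorem LinearMap.continuous_comp_ofBijective_symm {𝕜 V E F : Type*} [NontriviallyNormedField 𝕜]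
    [AddCommGroup V] [Module 𝕜 V] [NormedAddCommGroup E] [NormedSpace 𝕜 E] [CompleteSpace E]
    [NormedAddCommGroup F] [NormedSpace 𝕜 F] [CompleteSpace F] (ι : V →ₗ[𝕜] E) (f : V →ₗ[𝕜] F)
    (hf : Function.Bijective f) (hclosed : IsClosed (Set.range fun v => (ι v, f v))) :
    Continuous (ι ∘ₗ (LinearEquiv.ofBijective f hf).symm.toLinearMap) := by
  apply LinearMap.continuous_of_isClosed_graph
  have hgraph : ((ι ∘ₗ (LinearEquiv.ofBijective f hf).symm.toLinearMap).graph : Set (F × E)) =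
      Prod.swap ⁻¹' Set.range fun v => (ι v, f v) := by
    ext ⟨y, x⟩
    simp only [SetLike.mem_coe, LinearMap.mem_graph_iff, Set.mem_preimage, Prod.swap_prod_mk,
      Set.mem_range, Prod.mk.injEq, LinearMap.coe_comp, LinearEquiv.coe_coe, Function.comp_apply]
    constructor
    · rintro rfl
      exact ⟨_, rfl, LinearEquiv.apply_ofBijective_symm_apply f y⟩
    · rintro ⟨v, rfl, rfl⟩
      rw [LinearEquiv.ofBijective_symm_apply_apply]
  rw [hgraph]
  exact hclosed.preimage continuous_swap

theorem LinearPMap.isClosed_range_of_leftInverse {R E F : Type*} [CommRing R] [AddCommGroup E]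
    [Module R E] [TopologicalSpace E] [AddCommGroup F] [Module R F] [TopologicalSpace F]
    {T : E →ₗ.[R] F} (hT : T.IsClosed) {g : F → E} (hg : Continuous g)
    (hgT : ∀ x : T.domain, g (T x) = x) : _root_.IsClosed (LinearMap.range T.toFun : Set F) := by
  have hrange : (LinearMap.range T.toFun : Set F) = (fun y => (g y, y)) ⁻¹' T.graph := by
    ext y
    constructor
    · rintro ⟨x, rfl⟩
      show (g (T x), T x) ∈ T.graph
      rw [hgT]
      exact T.mem_graph x
    · intro hy
      obtain ⟨x, -, hx⟩ := T.mem_graph_iff.mp hy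
      exact ⟨x, hx⟩
  rw [hrange]
  exact hT.preimage (hg.prodMk continuous_id)

section AdjointKernel

variable {𝕜 E F : Type*} [RCLike 𝕜] [NormedAddCommGroup E] [InnerProductSpace 𝕜 E]
  [NormedAddCommGroup F] [InnerProductSpace 𝕜 F] [CompleteSpace E] {T : E →ₗ.[𝕜] F}

theorem LinearPMap.orthogonal_range_le_map_ker_adjoint (hT : Dense (T.domain : Set E)) :
    (LinearMap.range T.toFun)ᗮ ≤ (LinearMap.ker T.adjoint.toFun).map T.adjoint.domain.subtype := by
  intro y hy
  have hzero : ∀ x : T.domain, inner 𝕜 (0 : E) (x : E) = inner 𝕜 y (T x) := fun x => by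
    have hTx : inner 𝕜 (T x) y = 0 := (Submodule.mem_orthogonal _ _).mp hy (T x) ⟨x, rfl⟩
    rw [inner_zero_left, inner_eq_zero_symm.mp hTx]
  have hy' : y ∈ T.adjoint.domain := mem_adjoint_domain_of_exists y ⟨0, hzero⟩
  exact ⟨⟨y, hy'⟩, LinearMap.mem_ker.mpr (adjoint_apply_eq hT ⟨y, hy'⟩ hzero), rfl⟩

theorem LinearPMap.orthogonal_map_ker_adjoint_le_range [CompleteSpace F]
    (hT : Dense (T.domain : Set E)) (hR : _root_.IsClosed (LinearMap.range T.toFun : Set F)) :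
    ((LinearMap.ker T.adjoint.toFun).map T.adjoint.domain.subtype)ᗮ ≤ LinearMap.range T.toFun := by
  calc ((LinearMap.ker T.adjoint.toFun).map T.adjoint.domain.subtype)ᗮ
      ≤ (LinearMap.range T.toFun)ᗮᗮ :=
        Submodule.orthogonal_le (orthogonal_range_le_map_ker_adjoint hT)
    _ = LinearMap.range T.toFun := by
      rw [Submodule.orthogonal_orthogonal_eq_closure, hR.submodule_topologicalClosure_eq]

end AdjointKernel

section BoundaryForm

variable {A : H →ₗ.[ℂ] H}

theorem omegaForm_eq_zero_of_mem_domain_right (hdense : Dense (A.domain : Set H))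
    (hle : A ≤ A.adjoint) (x : A.adjoint.domain) {m : A.adjoint.domain} (hm : m ∈ minDom A) :
    omegaForm A x m = 0 := by
  have hAm : A.adjoint m = A ⟨m, hm⟩ := (hle.2 rfl).symm
  rw [omegaForm, hAm, LinearPMap.adjoint_isFormalAdjoint hdense x ⟨m, hm⟩, sub_self]

theorem omegaForm_swap (x y : A.adjoint.domain) :
    omegaForm A y x = -starRingEnd ℂ (omegaForm A x y) := by
  simp only [omegaForm, map_sub, inner_conj_symm, neg_sub]

theorem omegaForm_eq_zero_of_mem_domain_left (hdense : Dense (A.domain : Set H))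
    (hle : A ≤ A.adjoint) {m : A.adjoint.domain} (hm : m ∈ minDom A) (y : A.adjoint.domain) :
    omegaForm A m y = 0 := by
  rw [omegaForm_swap, omegaForm_eq_zero_of_mem_domain_right hdense hle y hm, map_zero, neg_zero]

theorem omegaForm_sub_omegaForm (x x' y y' : A.adjoint.domain) :
    omegaForm A x' y' - omegaForm A x y = omegaForm A (x' - x) y' + omegaForm A x (y' - y) := by
  simp only [omegaForm, LinearPMap.map_sub, Submodule.coe_sub, inner_sub_left, inner_sub_right]
  ring

theorem omegaHat_gammaMap (hdense : Dense (A.domain : Set H)) (hle : A ≤ A.adjoint)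
    (x y : A.adjoint.domain) : omegaHat A (gammaMap A x) (gammaMap A y) = omegaForm A x y := by
  have hx : Quotient.out (gammaMap A x) - x ∈ minDom A :=
    (Submodule.Quotient.eq _).mp (Quotient.out_eq _)
  have hy : Quotient.out (gammaMap A y) - y ∈ minDom A :=
    (Submodule.Quotient.eq _).mp (Quotient.out_eq _)
  rw [omegaHat, ← sub_eq_zero, omegaForm_sub_omegaForm,
    omegaForm_eq_zero_of_mem_domain_left hdense hle hx,
    omegaForm_eq_zero_of_mem_domain_right hdense hle x hy, add_zero]

theorem omegaHat_eq_zero_of_mem_cauchyData (hdense : Dense (A.domain : Set H))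
    (hle : A ≤ A.adjoint) {v w : beta A} (hv : v ∈ cauchyData A) (hw : w ∈ cauchyData A) :
    omegaHat A v w = 0 := by
  obtain ⟨x, hx, rfl⟩ := hv
  obtain ⟨y, hy, rfl⟩ := hw
  have hx0 : A.adjoint x = 0 := hx
  have hy0 : A.adjoint y = 0 := hy
  rw [omegaHat_gammaMap hdense hle, omegaForm, hx0, hy0, inner_zero_left, inner_zero_right,
    sub_zero]

theorem gammaMap_mem_cauchyData_of_adjoint_mem_range (hle : A ≤ A.adjoint)
    {x : A.adjoint.domain} (hx : A.adjoint x ∈ LinearMap.range A.toFun) :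
    gammaMap A x ∈ cauchyData A := by
  obtain ⟨m, hm⟩ := hx
  let m' : A.adjoint.domain := ⟨m, hle.1 m.2⟩
  have hker : A.adjoint (x - m') = 0 := by
    rw [LinearPMap.map_sub, ← hle.2 (x := m) (y := m') rfl, ← hm]
    exact sub_self _
  refine ⟨x - m', hker, ?_⟩
  rw [gammaMap, Submodule.mkQ_apply, Submodule.mkQ_apply, Submodule.Quotient.eq,
    sub_sub_cancel_left]
  exact neg_mem m.2

theorem mem_cauchyData_of_omegaHat_eq_zero (hdense : Dense (A.domain : Set H))
    (hle : A ≤ A.adjoint) (hR : IsClosed (LinearMap.range A.toFun : Set H)) {v : beta A}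
    (hv : ∀ w ∈ cauchyData A, omegaHat A v w = 0) : v ∈ cauchyData A := by
  obtain ⟨x, rfl⟩ := (minDom A).mkQ_surjective v
  refine gammaMap_mem_cauchyData_of_adjoint_mem_range hle
    (LinearPMap.orthogonal_map_ker_adjoint_le_range hdense hR ?_)
  rintro _ ⟨k, hk, rfl⟩
  have hk0 : A.adjoint k = 0 := LinearMap.mem_ker.mp hk
  have hω := hv (gammaMap A k) ⟨k, hk, rfl⟩
  rwa [← gammaMap, omegaHat_gammaMap hdense hle, omegaForm, hk0, inner_zero_right, sub_zero,
    inner_eq_zero_symm] at hω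

end BoundaryForm

section ClosedRangeOfInvertibleExtension

variable {A : H →ₗ.[ℂ] H}

theorem adjRestrict_graph (D : Submodule ℂ A.adjoint.domain) :
    ((adjRestrict A D).graph : Set (H × H)) =
      Set.range fun d : D => (((d : A.adjoint.domain) : H), A.adjoint d) := by
  ext ⟨a, b⟩
  simp only [SetLike.mem_coe, LinearPMap.mem_graph_iff, Set.mem_range, Prod.mk.injEq]
  constructor
  · rintro ⟨y, rfl, rfl⟩
    obtain ⟨t, htD, hty⟩ := y.2.1
    exact ⟨⟨t, htD⟩, hty, (LinearPMap.domRestrict_apply hty.symm).symm⟩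
  · rintro ⟨d, rfl, rfl⟩
    exact ⟨⟨d, ⟨d, d.2, rfl⟩, (d : A.adjoint.domain).2⟩, rfl, LinearPMap.domRestrict_apply rfl⟩

theorem isClosed_range_of_isSelfAdjoint_adjRestrict (hle : A ≤ A.adjoint) (hclosed : A.IsClosed)
    {D : Submodule ℂ A.adjoint.domain} (hDle : minDom A ≤ D)
    (hSA : IsSelfAdjoint (adjRestrict A D))
    (hbij : Function.Bijective fun d : D => A.adjoint (d : A.adjoint.domain)) :
    IsClosed (LinearMap.range A.toFun : Set H) := by
  have hgraph : IsClosed (Set.range fun d : D => (((d : A.adjoint.domain) : H), A.adjoint d)) :=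
    adjRestrict_graph D ▸ hSA.isClosed
  let f : D →ₗ[ℂ] H := A.adjoint.toFun ∘ₗ D.subtype
  have hf : Function.Bijective f := hbij
  have hg := LinearMap.continuous_comp_ofBijective_symm (A.adjoint.domain.subtype ∘ₗ D.subtype) f
    hf hgraph
  refine LinearPMap.isClosed_range_of_leftInverse hclosed hg fun x => ?_
  let d : D := ⟨⟨x, hle.1 x.2⟩, hDle x.2⟩
  have hfd : f d = A x := (hle.2 rfl).symm
  rw [← hfd, LinearMap.comp_apply, LinearEquiv.coe_coe, LinearEquiv.ofBijective_symm_apply_apply]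
  rfl

end ClosedRangeOfInvertibleExtension

theorem cauchyData_lagrangian_general
    (A : H →ₗ.[ℂ] H)
    (hdense : Dense (A.domain : Set H))
    (hclosed : IsClosed (A.graph : Set (H × H)))
    (hsym : ∀ x y : A.domain, ⟪A x, (y : H)⟫ = ⟪(x : H), A y⟫)
    (hex : ∃ D : Submodule ℂ A.adjoint.domain, minDom A ≤ D ∧
        IsSelfAdjoint (adjRestrict A D) ∧
        Function.Bijective fun d : D => A.adjoint (d : A.adjoint.domain)) :
    (∀ v ∈ cauchyData A, ∀ w ∈ cauchyData A, omegaHat A v w = 0) ∧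
    {v : beta A | ∀ w ∈ cauchyData A, omegaHat A v w = 0}
      = (cauchyData A : Set (beta A)) := by
  obtain ⟨D, hDle, hSA, hbij⟩ := hex
  have hle : A ≤ A.adjoint := LinearPMap.IsFormalAdjoint.le_adjoint hdense hsym
  have hR := isClosed_range_of_isSelfAdjoint_adjRestrict hle hclosed hDle hSA hbij
  have hiso : ∀ v ∈ cauchyData A, ∀ w ∈ cauchyData A, omegaHat A v w = 0 :=
    fun _ hv _ hw => omegaHat_eq_zero_of_mem_cauchyData hdense hle hv hw
  exact ⟨hiso, Set.Subset.antisymm (fun _ hv => mem_cauchyData_of_omegaHat_eq_zero hdense hle hR hv)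
    fun v hv _ hw => hiso v hv _ hw⟩

/-- If some intermediate extension `A_D` (with `dom A ⊆ D ⊆ dom A†`) is
self-adjoint and bijective `D → H`, then the natural Cauchy data space `CD(A) = γ(ker A†)`
is a Lagrangian subspace of `(β(A), ω̂)`: `ω̂` vanishes on `CD(A) × CD(A)` and `CD(A)` equals
its `ω̂`-annihilator. -/
theorem cauchyData_lagrangian
    [TopologicalSpace.SeparableSpace H]
    (A : H →ₗ.[ℂ] H)
    (hdense : Dense (A.domain : Set H))
    (hclosed : IsClosed (A.graph : Set (H × H)))
    (hsym : ∀ x y : A.domain, ⟪A x, (y : H)⟫ = ⟪(x : H), A y⟫)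
    (hex : ∃ D : Submodule ℂ A.adjoint.domain, minDom A ≤ D ∧
        IsSelfAdjoint (adjRestrict A D) ∧
        Function.Bijective fun d : D => A.adjoint (d : A.adjoint.domain)) :
    (∀ v ∈ cauchyData A, ∀ w ∈ cauchyData A, omegaHat A v w = 0) ∧
    {v : beta A | ∀ w ∈ cauchyData A, omegaHat A v w = 0}
      = (cauchyData A : Set (beta A)) :=
  cauchyData_lagrangian_general A hdense hclosed hsym hex
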